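/- Let 1 ≤ m ≤ n−1, let V be an m-dimensional linear subspace of ℝⁿ, let α ∈ (0,∞), and let X = X(V,α). For every dyadic cube Q in ℝⁿ and every x ∈ Q, setting s_{Q,X} = r_{Q,X} − √n·side Q where r_{Q,X} = 81·√n·max(α,1/α)·side Q, one has X_x ∩ B̄(x, s_{Q,X}) \ U(x, s_{Q,X}/2) ⊆ A_{Q,X}. -/

import Mathlib

open MeasureTheory Metric Set
open scoped ENNReal NNReal

noncomputable section

abbrev E (n : ℕ) := EuclideanSpace ℝ (Fin n)

/-- The bad cone `X(V,α) = {x : dist(x,V) > α · dist(x,V^⊥)}`. -/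
def badCone {n : ℕ} (V : Submodule ℝ (E n)) (α : ℝ) : Set (E n) :=
  {x | α * Metric.infDist x (Vᗮ : Set (E n)) < Metric.infDist x (V : Set (E n))}

/-- The translated bad cone `X_x = x + X(V,α)`. -/
def badConeAt {n : ℕ} (V : Submodule ℝ (E n)) (α : ℝ) (x : E n) : Set (E n) :=
  {y | y - x ∈ badCone V α}

/-- `f` has Lipschitz constant at most `α`. -/
def LipBound {n : ℕ} (V : Submodule ℝ (E n)) (α : ℝ) (f : V → Vᗮ) : Prop :=
  ∀ v w : V, dist (f v) (f w) ≤ α * dist v w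

/-- The graph of `f : V → V^⊥`, as a subset of `ℝⁿ`. -/
def graphOf {n : ℕ} (V : Submodule ℝ (E n)) (f : V → Vᗮ) : Set (E n) :=
  {x | ∃ v : V, x = (v : E n) + (f v : E n)}

/-- A half-open dyadic cube, described by generation `k` and corner coordinates `j`. -/
structure DyadicCube (n : ℕ) where
  k : ℤ
  j : Fin n → ℤ

namespace DyadicCube

/-- Side length `2^{-k}`. -/
def side {n : ℕ} (Q : DyadicCube n) : ℝ := 2 ^ (-Q.k)

/-- The cube as a subset of `ℝⁿ`. -/
def toSet {n : ℕ} (Q : DyadicCube n) : Set (E n) :=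
  {x | ∀ i, (Q.j i : ℝ) * Q.side ≤ x i ∧ x i < ((Q.j i : ℝ) + 1) * Q.side}

/-- The geometric center of the cube. -/
def center {n : ℕ} (Q : DyadicCube n) : E n :=
  (EuclideanSpace.equiv (Fin n) ℝ).symm fun i => ((Q.j i : ℝ) + 1 / 2) * Q.side

/-- The diameter `√n · side Q`. -/
def diam {n : ℕ} (Q : DyadicCube n) : ℝ := Real.sqrt n * Q.side

end DyadicCube

/-- The radius `r_{Q,X} = 81 √n max(α,1/α) side Q`. -/
def coneRadius {n : ℕ} (α : ℝ) (Q : DyadicCube n) : ℝ :=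
  81 * Real.sqrt n * max α α⁻¹ * Q.side

/-- The conical annulus `A_{Q,X} = X_Q ∩ B̄(x_Q,r_{Q,X}) \ U(x_Q,r_{Q,X}/3)`. -/
def conAnnulus {n : ℕ} (V : Submodule ℝ (E n)) (α : ℝ) (Q : DyadicCube n) : Set (E n) :=
  ((⋃ x ∈ Q.toSet, badConeAt V α x) ∩ closedBall Q.center (coneRadius α Q)) \
    ball Q.center (coneRadius α Q / 3)

/-- The discretized conical annulus `Δ*_{Q,X}`. -/
def discAnnulus {n : ℕ} (V : Submodule ℝ (E n)) (α : ℝ) (Q : DyadicCube n) :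
    Set (DyadicCube n) :=
  {R | R.side = Q.side ∧ (R.toSet ∩ conAnnulus V α Q).Nonempty}

/-- The conical defect `Defect(μ,Q,X)`. -/
def defect {n : ℕ} (μ : Measure (E n)) (V : Submodule ℝ (E n)) (α : ℝ)
    (Q : DyadicCube n) : ℝ≥0∞ :=
  if μ Q.toSet = 0 then 0
  else ∑' R : discAnnulus V α Q, μ (R : DyadicCube n).toSet / μ Q.toSet

/-- The conical Dini function `G_{μ,X}(x)`. -/
def dini {n : ℕ} (μ : Measure (E n)) (V : Submodule ℝ (E n)) (α : ℝ) (x : E n) : ℝ≥0∞ :=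
  ∑' Q : {Q : DyadicCube n // Q.side ≤ 1 ∧ x ∈ Q.toSet}, defect μ V α Q.1

/-- `gap(S,T) = inf {|s-t| : s ∈ S, t ∈ T}` (with value `∞` if either set is empty). -/
def gap {n : ℕ} (S T : Set (E n)) : ℝ≥0∞ :=
  ⨅ (s : S) (t : T), edist (s : E n) (t : E n)

/-- `excess(S,T) = sup_{s∈S} inf_{t∈T} |s-t|` (with `excess(∅,T) = 0`). -/
def excess {n : ℕ} (S T : Set (E n)) : ℝ≥0∞ :=
  ⨆ s : S, ⨅ t : T, edist (s : E n) (t : E n)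

/-- `S` is a tree of dyadic cubes with top cube `top`. -/
def IsDyadicTree {n : ℕ} (S : Set (DyadicCube n)) (top : DyadicCube n) : Prop :=
  top ∈ S ∧ (∀ Q ∈ S, Q.toSet ⊆ top.toSet) ∧
    ∀ Q ∈ S, ∀ P : DyadicCube n, Q.toSet ⊆ P.toSet → P.toSet ⊆ top.toSet → P ∈ S

/-- The set of leaves of a family `S` of dyadic cubes with top cube `top`:
the union over infinite branches of the intersections along the branch. -/
def leavesOf {n : ℕ} (top : DyadicCube n) (S : Set (DyadicCube n)) : Set (E n) :=
  {x | ∃ β : ℕ → DyadicCube n, (∀ i, β i ∈ S) ∧ (∀ i, (β i).k = top.k + i) ∧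
    (∀ i, (β (i + 1)).toSet ⊆ (β i).toSet) ∧ ∀ i, x ∈ (β i).toSet}

/-- `Γ` is an `m`-dimensional Lipschitz graph in `ℝⁿ`. -/
def IsLipGraph (n m : ℕ) (Γ : Set (E n)) : Prop :=
  ∃ (V : Submodule ℝ (E n)) (f : V → Vᗮ) (L : ℝ),
    Module.finrank ℝ V = m ∧ 0 ≤ L ∧ LipBound V L f ∧ Γ = graphOf V f

/-- `μ` is carried by `m`-dimensional Lipschitz graphs. -/
def CarriedByGraphs (n m : ℕ) (μ : Measure (E n)) : Prop :=
  ∃ Γ : ℕ → Set (E n), (∀ i, IsLipGraph n m (Γ i)) ∧ μ (univ \ ⋃ i, Γ i) = 0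

/-- `μ` is singular to `m`-dimensional Lipschitz graphs. -/
def SingularToGraphs (n m : ℕ) (μ : Measure (E n)) : Prop :=
  ∀ Γ : Set (E n), IsLipGraph n m Γ → μ Γ = 0


/-!
Every point `x` of `Q` lies within `diam Q / 2` of the center `x_Q`, so by the triangle
inequality the annulus `B̄(x, s) \ U(x, s/2)` with `s = r - diam Q` lies in
`B̄(x_Q, r) \ U(x_Q, r/3)` as soon as `6 · diam Q ≤ r`; this holds since `max(α, 1/α) ≥ 1`.
The cone condition transfers directly, because `X_x ⊆ X_Q`.
-/

theorem EuclideanSpace.dist_le_sqrt_card_mul {ι : Type*} [Fintype ι]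
    {x y : EuclideanSpace ℝ ι} {c : ℝ} (hc : 0 ≤ c) (h : ∀ i, dist (x i) (y i) ≤ c) :
    dist x y ≤ √(Fintype.card ι) * c := by
  calc dist x y = √(∑ i, dist (x i) (y i) ^ 2) := EuclideanSpace.dist_eq x y
    _ ≤ √(∑ _ : ι, c ^ 2) := by gcongr with i; exact h i
    _ = √(Fintype.card ι) * c := by
      rw [Finset.sum_const, Finset.card_univ, nsmul_eq_mul, Real.sqrt_mul (by positivity),
        Real.sqrt_sq hc]

theorem one_le_max_inv {α : ℝ} (hα : 0 < α) : 1 ≤ max α α⁻¹ := by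
  rcases le_total α 1 with h | h
  · exact le_max_of_le_right ((one_le_inv₀ hα).mpr h)
  · exact le_max_of_le_left h

theorem closedBall_diff_ball_subset {X : Type*} [PseudoMetricSpace X] {x c : X}
    {δ s t r u : ℝ} (hx : dist x c ≤ δ) (hs : s + δ ≤ r) (ht : u + δ ≤ t) :
    closedBall x s \ ball x t ⊆ closedBall c r \ ball c u := by
  rintro y ⟨hys, hyt⟩
  rw [mem_closedBall] at hys
  rw [mem_ball, not_lt] at hyt
  refine ⟨mem_closedBall.2 ?_, fun hyu => ?_⟩
  · linarith [dist_triangle y x c]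
  · linarith [mem_ball.1 hyu, dist_triangle y c x, dist_comm x c]

namespace DyadicCube

variable {n : ℕ} (Q : DyadicCube n)

theorem side_pos : 0 < Q.side := by
  unfold side; positivity

theorem diam_nonneg : 0 ≤ Q.diam := by
  unfold diam; exact mul_nonneg (Real.sqrt_nonneg _) Q.side_pos.le

theorem dist_center_le {x : E n} (hx : x ∈ Q.toSet) : dist x Q.center ≤ Q.diam / 2 := by
  have hcoord : ∀ i, dist (x i) (Q.center i) ≤ Q.side / 2 := fun i => by
    have hc : Q.center i = ((Q.j i : ℝ) + 1 / 2) * Q.side := rfl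
    rw [hc, Real.dist_eq, abs_sub_le_iff]
    constructor <;> linarith [hx i]
  have h := EuclideanSpace.dist_le_sqrt_card_mul (by linarith [Q.side_pos]) hcoord
  rw [Fintype.card_fin] at h
  rwa [diam, mul_div_assoc]

variable {α : ℝ}

theorem six_mul_diam_le_coneRadius (hα : 0 < α) : 6 * Q.diam ≤ coneRadius α Q := by
  have hM := one_le_max_inv hα
  have hd := Q.diam_nonneg
  calc 6 * Q.diam ≤ 81 * max α α⁻¹ * Q.diam := by nlinarith
    _ = coneRadius α Q := by rw [coneRadius, diam]; ring

end DyadicCube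

theorem statement2_general {n : ℕ} (V : Submodule ℝ (E n)) (α : ℝ) (hα : 0 < α)
    (Q : DyadicCube n) (x : E n) (hx : x ∈ Q.toSet) :
    (badConeAt V α x ∩
        closedBall x (coneRadius α Q - Real.sqrt n * Q.side)) \
        ball x ((coneRadius α Q - Real.sqrt n * Q.side) / 2)
      ⊆ conAnnulus V α Q := by
  rintro y ⟨⟨hcone, hys⟩, hyt⟩
  have hr := Q.six_mul_diam_le_coneRadius hα
  have hd := Q.diam_nonneg
  have hdiam : Real.sqrt n * Q.side = Q.diam := rfl
  rw [hdiam] at hys hyt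
  obtain ⟨hyr, hyu⟩ := closedBall_diff_ball_subset (r := coneRadius α Q)
    (u := coneRadius α Q / 3) (Q.dist_center_le hx) (by linarith) (by linarith) ⟨hys, hyt⟩
  exact ⟨⟨mem_biUnion hx hcone, hyr⟩, hyu⟩

theorem statement2 {n m : ℕ} (hm : 1 ≤ m) (hmn : m ≤ n - 1)
    (V : Submodule ℝ (E n)) (hV : Module.finrank ℝ V = m)
    (α : ℝ) (hα : 0 < α) (Q : DyadicCube n) (x : E n) (hx : x ∈ Q.toSet) :
    (badConeAt V α x ∩
        closedBall x (coneRadius α Q - Real.sqrt n * Q.side)) \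
        ball x ((coneRadius α Q - Real.sqrt n * Q.side) / 2)
      ⊆ conAnnulus V α Q :=
  statement2_general V α hα Q x hx

end
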